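/- Algorithmic term equivalence and path equivalence are transitive: if Γ ⊢ M ⇔ N : A and Γ ⊢ N ⇔ O : A then Γ ⊢ M ⇔ O : A; and if Γ ⊢ M ↔ N : A and Γ ⊢ N ↔ O : A then Γ ⊢ M ↔ O : A. -/

import Mathlib

/-- Simple types: base type `i` and function types. -/
inductive Ty : Type
  | base : Ty
  | arr  : Ty → Ty → Ty

/-- Untyped lambda terms with de Bruijn indices. -/
inductive Tm : Type
  | var : ℕ → Tm
  | lam : Tm → Tm
  | app : Tm → Tm → Tm

namespace Tm

def upRen (ρ : ℕ → ℕ) : ℕ → ℕ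
  | 0 => 0
  | n + 1 => ρ n + 1

/-- Renaming. -/
def rename (ρ : ℕ → ℕ) : Tm → Tm
  | var n => var (ρ n)
  | lam M => lam (rename (upRen ρ) M)
  | app M N => app (rename ρ M) (rename ρ N)

/-- Lifting a simultaneous substitution under a binder. -/
def lift (σ : ℕ → Tm) : ℕ → Tm
  | 0 => var 0
  | n + 1 => rename Nat.succ (σ n)

/-- Simultaneous (capture-avoiding) substitution. -/
def subst (σ : ℕ → Tm) : Tm → Tm
  | var n => σ n
  | lam M => lam (subst (lift σ) M)
  | app M N => app (subst σ M) (subst σ N)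

/-- Extending a substitution with a term for the top variable. -/
def scons (N : Tm) (σ : ℕ → Tm) : ℕ → Tm
  | 0 => N
  | n + 1 => σ n

/-- Substitution of a single term for the top variable. -/
def subst1 (N M : Tm) : Tm := subst (scons N var) M

end Tm

/-- Single-step weak head reduction. -/
inductive Step : Tm → Tm → Prop
  | beta {M N : Tm} : Step (Tm.app (Tm.lam M) N) (Tm.subst1 N M)
  | app {M M' N : Tm} : Step M M' → Step (Tm.app M N) (Tm.app M' N)

/-- Multi-step weak head reduction (reflexive-transitive closure). -/
inductive MStep : Tm → Tm → Prop
  | refl {M : Tm} : MStep M M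
  | trans1 {M M' M'' : Tm} : Step M M' → MStep M' M'' → MStep M M''

/-- Paths (neutral terms): a variable applied to arguments. -/
inductive IsPath : Tm → Prop
  | var {n : ℕ} : IsPath (Tm.var n)
  | app {M N : Tm} : IsPath M → IsPath (Tm.app M N)

/-- Typing contexts (de Bruijn): the `n`-th entry types variable `n`. -/
abbrev Ctx := List Ty

mutual
  /-- Algorithmic term equivalence `Γ ⊢ M ⇔ N : A`. -/
  inductive AlgTm : Ctx → Tm → Tm → Ty → Prop
    | base {Γ : Ctx} {M N P Q : Tm} :
        MStep M P → MStep N Q → AlgPath Γ P Q Ty.base → AlgTm Γ M N Ty.base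
    | arr {Γ : Ctx} {M N : Tm} {A B : Ty} :
        AlgTm (A :: Γ) (Tm.app (Tm.rename Nat.succ M) (Tm.var 0))
                       (Tm.app (Tm.rename Nat.succ N) (Tm.var 0)) B →
        AlgTm Γ M N (Ty.arr A B)

  /-- Algorithmic path equivalence `Γ ⊢ M ↔ N : A`. -/
  inductive AlgPath : Ctx → Tm → Tm → Ty → Prop
    | var {Γ : Ctx} {n : ℕ} {A : Ty} :
        Γ[n]? = some A → AlgPath Γ (Tm.var n) (Tm.var n) A
    | app {Γ : Ctx} {M1 M2 N1 N2 : Tm} {A B : Ty} :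
        AlgPath Γ M1 M2 (Ty.arr A B) → AlgTm Γ N1 N2 A →
        AlgPath Γ (Tm.app M1 N1) (Tm.app M2 N2) B
end

/-- `PathSub Δ π Γ`: π maps each variable `x:T` of Γ to a path `P` with `Δ ⊢ P ↔ P : T`. -/
def PathSub (Δ : Ctx) (π : ℕ → Tm) (Γ : Ctx) : Prop :=
  ∀ n A, Γ[n]? = some A → AlgPath Δ (π n) (π n) A

/-- Logical equivalence `Γ ⊢ M ≈ N : A`, defined by recursion on the type. -/
def Log : Ty → Ctx → Tm → Tm → Prop
  | Ty.base => fun Γ M N => AlgTm Γ M N Ty.base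
  | Ty.arr A B => fun Γ M N =>
      ∀ (Δ : Ctx) (π : ℕ → Tm), PathSub Δ π Γ →
        ∀ N1 N2, Log A Δ N1 N2 →
          Log B Δ (Tm.app (Tm.subst π M) N1) (Tm.app (Tm.subst π N) N2)

/-- `LogSub Δ σ1 σ2 Γ`: the substitutions σ1, σ2 are pointwise logically related at Γ. -/
def LogSub (Δ : Ctx) (σ1 σ2 : ℕ → Tm) (Γ : Ctx) : Prop :=
  ∀ n A, Γ[n]? = some A → Log A Δ (σ1 n) (σ2 n)

/-- Declarative equivalence `Γ ⊢ M ≡ N : A`. -/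
inductive Decl : Ctx → Tm → Tm → Ty → Prop
  | beta {Γ : Ctx} {M1 M2 N1 N2 : Tm} {A B : Ty} :
      Decl (A :: Γ) M2 N2 B → Decl Γ M1 N1 A →
      Decl Γ (Tm.app (Tm.lam M2) M1) (Tm.subst1 N1 N2) B
  | lam {Γ : Ctx} {M N : Tm} {A B : Ty} :
      Decl (A :: Γ) M N B → Decl Γ (Tm.lam M) (Tm.lam N) (Ty.arr A B)
  | ext {Γ : Ctx} {M N : Tm} {A B : Ty} :
      Decl (A :: Γ) (Tm.app (Tm.rename Nat.succ M) (Tm.var 0))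
                    (Tm.app (Tm.rename Nat.succ N) (Tm.var 0)) B →
      Decl Γ M N (Ty.arr A B)
  | var {Γ : Ctx} {n : ℕ} {A : Ty} :
      Γ[n]? = some A → Decl Γ (Tm.var n) (Tm.var n) A
  | app {Γ : Ctx} {M1 M2 N1 N2 : Tm} {A B : Ty} :
      Decl Γ M1 M2 (Ty.arr A B) → Decl Γ N1 N2 A →
      Decl Γ (Tm.app M1 N1) (Tm.app M2 N2) B
  | symm {Γ : Ctx} {M N : Tm} {A : Ty} : Decl Γ M N A → Decl Γ N M A
  | trans {Γ : Ctx} {M N O : Tm} {A : Ty} :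
      Decl Γ M N A → Decl Γ N O A → Decl Γ M O A

lemma path_no_step {P Q : Tm} (hp : IsPath P) (hs : Step P Q) : False := by
  induction hs with
  | beta => cases hp with | app h => cases h
  | app _ ih => cases hp with | app h => exact ih h

lemma step_det {M N N' : Tm} (h1 : Step M N) (h2 : Step M N') : N = N' := by
  induction h1 generalizing N' with
  | beta => cases h2 with
    | beta => rfl
    | app h => cases h
  | app h ih => cases h2 with
    | beta => cases h
    | app h' => rw [ih h']

lemma mstep_det {M P Q : Tm} (h1 : MStep M P) (h2 : MStep M Q)
    (hp : IsPath P) (hq : IsPath Q) : P = Q := by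
  induction h1 generalizing Q with
  | refl =>
    cases h2 with
    | refl => rfl
    | trans1 s _ => exact (path_no_step hp s).elim
  | trans1 s _ ih =>
    cases h2 with
    | refl => exact (path_no_step hq s).elim
    | trans1 s' m' => exact ih (step_det s s' ▸ m') hp hq

lemma algpath_ispath {Γ : Ctx} {P Q : Tm} {A : Ty} (h : AlgPath Γ P Q A) :
    IsPath P ∧ IsPath Q := by
  refine AlgPath.rec (motive_1 := fun _ _ _ _ _ => True)
    (motive_2 := fun _ P Q _ _ => IsPath P ∧ IsPath Q)
    ?_ ?_ ?_ ?_ h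
  · intros; trivial
  · intros; trivial
  · intros; exact ⟨IsPath.var, IsPath.var⟩
  · intro _ _ _ _ _ _ _ _ _ ih _; exact ⟨IsPath.app ih.1, IsPath.app ih.2⟩

lemma path_unique_ty {Γ : Ctx} {P Q R : Tm} {A A' : Ty}
    (h : AlgPath Γ P Q A) : AlgPath Γ Q R A' → A = A' := by
  refine AlgPath.rec (motive_1 := fun _ _ _ _ _ => True)
    (motive_2 := fun Γ P Q A _ => ∀ R A', AlgPath Γ Q R A' → A = A')
    ?_ ?_ ?_ ?_ h R A'
  · intros; trivial
  · intros; trivial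
  · intro Γ n A hget R A' h2
    cases h2 with | var hget' => rw [hget] at hget'; exact (Option.some.inj hget')
  · intro Γ M1 M2 N1 N2 A B _ _ ih _ R A' h2
    cases h2 with
    | app hpath _ => exact (Ty.arr.inj (ih _ _ hpath)).2

/-- Algorithmic term and path equivalence are transitive. -/
theorem alg_trans (Gamma : Ctx) (M N O : Tm) (A : Ty) :
    (AlgTm Gamma M N A -> AlgTm Gamma N O A -> AlgTm Gamma M O A) ∧
    (AlgPath Gamma M N A -> AlgPath Gamma N O A -> AlgPath Gamma M O A) := by
  have key : (∀ Γ M N A, AlgTm Γ M N A → ∀ O, AlgTm Γ N O A → AlgTm Γ M O A) ∧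
      (∀ Γ M N A, AlgPath Γ M N A → ∀ O, AlgPath Γ N O A → AlgPath Γ M O A) := by
    constructor
    · intro Γ M N A h
      refine AlgTm.rec (motive_1 := fun Γ M N A _ => ∀ O, AlgTm Γ N O A → AlgTm Γ M O A)
        (motive_2 := fun Γ M N A _ => ∀ O, AlgPath Γ N O A → AlgPath Γ M O A)
        ?_ ?_ ?_ ?_ h
      · intro Γ M N P Q hMP hNQ hPQ ihPQ O h2
        cases h2 with
        | base hNQ' hOR hQR =>
          have hq : IsPath _ := (algpath_ispath hPQ).2
          have hq' : IsPath _ := (algpath_ispath hQR).1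
          have := mstep_det hNQ hNQ' hq hq'
          subst this
          exact AlgTm.base hMP hOR (ihPQ _ hQR)
      · intro Γ M N A B _ ih O h2
        cases h2 with
        | arr h' => exact AlgTm.arr (ih _ h')
      · intro Γ n A hget O h2
        cases h2 with
        | var => exact AlgPath.var hget
      · intro Γ M1 M2 N1 N2 A B hpath _ ihp iht O h2
        cases h2 with
        | @app _ _ M3 _ N3 A' _ hpath' htm' =>
          have hAeq : Ty.arr A B = Ty.arr A' B := path_unique_ty hpath hpath'
          have hA : A = A' := (Ty.arr.inj hAeq).1
          subst hA
          exact AlgPath.app (ihp _ hpath') (iht _ htm')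
    · intro Γ M N A h
      refine AlgPath.rec (motive_1 := fun Γ M N A _ => ∀ O, AlgTm Γ N O A → AlgTm Γ M O A)
        (motive_2 := fun Γ M N A _ => ∀ O, AlgPath Γ N O A → AlgPath Γ M O A)
        ?_ ?_ ?_ ?_ h
      · intro Γ M N P Q hMP hNQ hPQ ihPQ O h2
        cases h2 with
        | base hNQ' hOR hQR =>
          have hq : IsPath _ := (algpath_ispath hPQ).2
          have hq' : IsPath _ := (algpath_ispath hQR).1
          have := mstep_det hNQ hNQ' hq hq'
          subst this
          exact AlgTm.base hMP hOR (ihPQ _ hQR)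
      · intro Γ M N A B _ ih O h2
        cases h2 with
        | arr h' => exact AlgTm.arr (ih _ h')
      · intro Γ n A hget O h2
        cases h2 with
        | var => exact AlgPath.var hget
      · intro Γ M1 M2 N1 N2 A B hpath _ ihp iht O h2
        cases h2 with
        | @app _ _ M3 _ N3 A' _ hpath' htm' =>
          have hAeq : Ty.arr A B = Ty.arr A' B := path_unique_ty hpath hpath'
          have hA : A = A' := (Ty.arr.inj hAeq).1
          subst hA
          exact AlgPath.app (ihp _ hpath') (iht _ htm')
  exact ⟨fun h1 h2 => key.1 _ _ _ _ h1 _ h2, fun h1 h2 => key.2 _ _ _ _ h1 _ h2⟩
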